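/- Let W and V be vector spaces over ℝ and φ : W → V a linear map. For A ∈ GL(φ)₁ let A† := −A∘(id_V + φ∘A)⁻¹. Then for all A₁, A₂ ∈ GL(φ)₁: (a) id_W + A₂†∘φ = (id_W + A₂∘φ)⁻¹; (b) the Peiffer identity holds: (id_W + A₂∘φ)⁻¹ ∘ A₁ ∘ (id_V + φ∘A₂) = A₂† ⊙ A₁ ⊙ A₂. -/

import Mathlib

/-!
Write `Q = 1 + φ∘A`; then `A†∘Q = -A`, which says exactly that `A† ⊙ A = 0`.
The rest is bookkeeping with two identities of the "group law":
`(1 + B∘φ)∘(1 + A∘φ) = 1 + (B ⊙ A)∘φ`, which for `B = A†` gives `(1 + A†∘φ)∘(1 + A∘φ) = 1`,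
i.e. (a); and `(B ⊙ A₁) ⊙ A₂ = (1 + B∘φ)∘A₁∘(1 + φ∘A₂) + B ⊙ A₂`, which for `B = A₂†`
reduces (b) to (a).
-/

/-- The set `GL(φ)₁` of linear maps `A : V → W` such that `1 + A∘φ` and `1 + φ∘A` are
bijective. -/
def GLone {W V : Type*} [AddCommGroup W] [Module ℝ W] [AddCommGroup V] [Module ℝ V]
    (φ : W →ₗ[ℝ] V) : Set (V →ₗ[ℝ] W) :=
  {A | Function.Bijective ⇑((LinearMap.id : W →ₗ[ℝ] W) + A ∘ₗ φ) ∧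
       Function.Bijective ⇑((LinearMap.id : V →ₗ[ℝ] V) + φ ∘ₗ A)}

/-- The operation `A₁ ⊙ A₂ := A₁ + A₂ + A₁∘φ∘A₂`. -/
def odotL {W V : Type*} [AddCommGroup W] [Module ℝ W] [AddCommGroup V] [Module ℝ V]
    (φ : W →ₗ[ℝ] V) (A₁ A₂ : V →ₗ[ℝ] W) : V →ₗ[ℝ] W :=
  A₁ + A₂ + A₁ ∘ₗ φ ∘ₗ A₂

/-- The inverse `A† := -A ∘ (1 + φ∘A)⁻¹`. -/
noncomputable def daggerL {W V : Type*} [AddCommGroup W] [Module ℝ W] [AddCommGroup V]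
    [Module ℝ V] (φ : W →ₗ[ℝ] V) (A : V →ₗ[ℝ] W)
    (h₂ : Function.Bijective ⇑((LinearMap.id : V →ₗ[ℝ] V) + φ ∘ₗ A)) : V →ₗ[ℝ] W :=
  -(A ∘ₗ (LinearEquiv.ofBijective ((LinearMap.id : V →ₗ[ℝ] V) + φ ∘ₗ A) h₂).symm.toLinearMap)

theorem LinearEquiv.toLinearMap_ofBijective {R M N : Type*} [Semiring R] [AddCommMonoid M]
    [AddCommMonoid N] [Module R M] [Module R N] (f : M →ₗ[R] N) (hf : Function.Bijective f) :
    (LinearEquiv.ofBijective f hf).toLinearMap = f :=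
  LinearMap.ext fun _ => rfl

section

variable {W V : Type*} [AddCommGroup W] [Module ℝ W] [AddCommGroup V] [Module ℝ V]
  (φ : W →ₗ[ℝ] V)

theorem id_add_comp_comp_id_add_comp (B A : V →ₗ[ℝ] W) :
    ((LinearMap.id : W →ₗ[ℝ] W) + B ∘ₗ φ) ∘ₗ ((LinearMap.id : W →ₗ[ℝ] W) + A ∘ₗ φ) =
      (LinearMap.id : W →ₗ[ℝ] W) + odotL φ B A ∘ₗ φ := by
  ext x
  simp only [odotL, LinearMap.comp_apply, LinearMap.add_apply, LinearMap.id_apply, map_add]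
  abel

theorem odotL_odotL (B A₁ A₂ : V →ₗ[ℝ] W) :
    odotL φ (odotL φ B A₁) A₂ =
      ((LinearMap.id : W →ₗ[ℝ] W) + B ∘ₗ φ) ∘ₗ A₁ ∘ₗ ((LinearMap.id : V →ₗ[ℝ] V) + φ ∘ₗ A₂) +
        odotL φ B A₂ := by
  ext x
  simp only [odotL, LinearMap.comp_apply, LinearMap.add_apply, LinearMap.id_apply, map_add]
  abel

theorem daggerL_comp_id_add_comp (A : V →ₗ[ℝ] W)
    (h : Function.Bijective ⇑((LinearMap.id : V →ₗ[ℝ] V) + φ ∘ₗ A)) :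
    daggerL φ A h ∘ₗ ((LinearMap.id : V →ₗ[ℝ] V) + φ ∘ₗ A) = -A := by
  conv_lhs => rw [← LinearEquiv.toLinearMap_ofBijective _ h]
  rw [daggerL, LinearMap.neg_comp, LinearMap.comp_assoc, LinearEquiv.symm_comp, LinearMap.comp_id]

theorem odotL_daggerL_self (A : V →ₗ[ℝ] W)
    (h : Function.Bijective ⇑((LinearMap.id : V →ₗ[ℝ] V) + φ ∘ₗ A)) :
    odotL φ (daggerL φ A h) A = 0 := by
  have hQ := daggerL_comp_id_add_comp φ A h
  rw [LinearMap.comp_add, LinearMap.comp_id] at hQ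
  rw [odotL, add_right_comm, hQ, neg_add_cancel]

theorem id_add_daggerL_comp (A : V →ₗ[ℝ] W)
    (h₁ : Function.Bijective ⇑((LinearMap.id : W →ₗ[ℝ] W) + A ∘ₗ φ))
    (h₂ : Function.Bijective ⇑((LinearMap.id : V →ₗ[ℝ] V) + φ ∘ₗ A)) :
    (LinearMap.id : W →ₗ[ℝ] W) + daggerL φ A h₂ ∘ₗ φ =
      (LinearEquiv.ofBijective ((LinearMap.id : W →ₗ[ℝ] W) + A ∘ₗ φ) h₁).symm.toLinearMap := by
  rw [← LinearMap.id_comp (LinearEquiv.ofBijective _ h₁).symm.toLinearMap,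
    LinearEquiv.eq_comp_toLinearMap_symm, LinearEquiv.toLinearMap_ofBijective,
    id_add_comp_comp_id_add_comp, odotL_daggerL_self, LinearMap.zero_comp, add_zero]

end

/-- for `A₁, A₂ ∈ GL(φ)₁`, one has `1 + A₂†∘φ = (1 + A₂∘φ)⁻¹` and the Peiffer
identity `(1 + A₂∘φ)⁻¹ ∘ A₁ ∘ (1 + φ∘A₂) = A₂† ⊙ A₁ ⊙ A₂`. -/
theorem stmt5 {W V : Type*} [AddCommGroup W] [Module ℝ W] [AddCommGroup V] [Module ℝ V]
    (φ : W →ₗ[ℝ] V) :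
    -- (a)
    (∀ (A₂ : V →ₗ[ℝ] W)
        (h₁ : Function.Bijective ⇑((LinearMap.id : W →ₗ[ℝ] W) + A₂ ∘ₗ φ))
        (h₂ : Function.Bijective ⇑((LinearMap.id : V →ₗ[ℝ] V) + φ ∘ₗ A₂)),
      (LinearMap.id : W →ₗ[ℝ] W) + daggerL φ A₂ h₂ ∘ₗ φ =
        (LinearEquiv.ofBijective ((LinearMap.id : W →ₗ[ℝ] W) + A₂ ∘ₗ φ)
          h₁).symm.toLinearMap) ∧
    -- (b)
    (∀ (A₁ A₂ : V →ₗ[ℝ] W), A₁ ∈ GLone φ →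
      ∀ (h₁ : Function.Bijective ⇑((LinearMap.id : W →ₗ[ℝ] W) + A₂ ∘ₗ φ))
        (h₂ : Function.Bijective ⇑((LinearMap.id : V →ₗ[ℝ] V) + φ ∘ₗ A₂)),
      (LinearEquiv.ofBijective ((LinearMap.id : W →ₗ[ℝ] W) + A₂ ∘ₗ φ) h₁).symm.toLinearMap
          ∘ₗ A₁ ∘ₗ ((LinearMap.id : V →ₗ[ℝ] V) + φ ∘ₗ A₂) =
        odotL φ (odotL φ (daggerL φ A₂ h₂) A₁) A₂) := by
  refine ⟨fun A₂ h₁ h₂ => id_add_daggerL_comp φ A₂ h₁ h₂, fun A₁ A₂ _ h₁ h₂ => ?_⟩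
  rw [odotL_odotL, odotL_daggerL_self, add_zero, id_add_daggerL_comp φ A₂ h₁ h₂]
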